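/- Equip ℝ^∞ with the coordinatewise product (x_n)·(y_n) := (x_n y_n). Then ℝ^∞ is a commutative topological algebra (the multiplication is jointly continuous for the inductive limit topology), and ℝ^∞ has no proper dense subalgebra: every subalgebra of ℝ^∞ that is dense equals ℝ^∞. In particular, ℝ^∞ is ℵ₀-dense-algebrable in itself but not ℵ₀-infinitely ℵ₀-dense-algebrable. -/

import Mathlib

open Cardinal

/-- The submodule of `ℕ → ℝ` consisting of finitely supported sequences. -/
def RinfSubmodule : Submodule ℝ (ℕ → ℝ) where
  carrier := { f | ∃ N : ℕ, ∀ n, N ≤ n → f n = 0 }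
  add_mem' := by
    rintro f g ⟨N, hN⟩ ⟨M, hM⟩
    exact ⟨max N M, fun n hn => by
      simp [hN n (le_trans (le_max_left _ _) hn), hM n (le_trans (le_max_right _ _) hn)]⟩
  zero_mem' := ⟨0, fun n _ => rfl⟩
  smul_mem' := by
    rintro c f ⟨N, hN⟩
    exact ⟨N, fun n hn => by simp [hN n hn]⟩

/-- `ℝ^∞`, the space of finitely supported real sequences, as a type synonym (so that it does
not inherit the subspace topology; it will be equipped with the inductive limit topology). -/
def Rinf : Type := RinfSubmodule

instance : AddCommGroup Rinf := inferInstanceAs (AddCommGroup RinfSubmodule)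
noncomputable instance : Module ℝ Rinf := inferInstanceAs (Module ℝ RinfSubmodule)

/-- The inclusion `u_n : ℝⁿ → ℝ^∞`. -/
def uMap (n : ℕ) (x : Fin n → ℝ) : Rinf :=
  (⟨fun i => if h : i < n then x ⟨i, h⟩ else 0,
    ⟨n, fun _ hm => dif_neg (Nat.not_lt.mpr hm)⟩⟩ : RinfSubmodule)

/-- The inductive limit (final) topology on `ℝ^∞` with respect to the inclusions
`u_n : ℝⁿ → ℝ^∞`, where each `ℝⁿ` carries the Euclidean (product) topology. -/
instance RinfTopology : TopologicalSpace Rinf :=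
  ⨆ n : ℕ, TopologicalSpace.coinduced (uMap n) inferInstance

/-- The canonical basis vector `e_m` of `ℝ^∞` (`1` in coordinate `m`, `0` elsewhere). -/
noncomputable def eRinf (m : ℕ) : Rinf :=
  (⟨fun i => if i = m then 1 else 0, ⟨m + 1, fun k hk => if_neg (by omega)⟩⟩ : RinfSubmodule)

/-- The underlying sequence of an element of `ℝ^∞`. -/
def Rinf.seq (x : Rinf) : ℕ → ℝ := (show ↥RinfSubmodule from x).1

/-- The coordinatewise product on `ℝ^∞`: `(x_n)·(y_n) := (x_n y_n)`. -/
noncomputable instance : Mul Rinf :=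
  ⟨fun x y => (⟨fun n => x.seq n * y.seq n, by
    obtain ⟨N, hN⟩ := (show ↥RinfSubmodule from x).2
    exact ⟨N, fun n hn => by
      have : x.seq n = 0 := hN n hn
      simp [this]⟩⟩ : RinfSubmodule)⟩

/-- `W` is a (non-unital) subalgebra of `ℝ^∞`: a linear subspace closed under the product. -/
def IsSubalgebraRinf (W : Submodule ℝ Rinf) : Prop :=
  ∀ x ∈ W, ∀ y ∈ W, x * y ∈ W

/-- `W` is the subalgebra of `ℝ^∞` generated by `S`: the smallest subalgebra containing `S`. -/
def GeneratesAlg (S : Set Rinf) (W : Submodule ℝ Rinf) : Prop :=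
  IsSubalgebraRinf W ∧ S ⊆ (W : Set Rinf) ∧
    ∀ W' : Submodule ℝ Rinf, IsSubalgebraRinf W' → S ⊆ (W' : Set Rinf) → W ≤ W'

/-- `W` is an `ℵ₀`-generated subalgebra of `ℝ^∞`: the smallest cardinality of a generator set
of `W` is `ℵ₀`. -/
def IsAleph0GenAlg (W : Submodule ℝ Rinf) : Prop :=
  (∃ S : Set Rinf, GeneratesAlg S W ∧ #↥S = Cardinal.aleph0) ∧
  ∀ S : Set Rinf, GeneratesAlg S W → Cardinal.aleph0 ≤ #↥S


/-!
The inductive limit topology of `ℝ^∞` is the box topology: every neighbourhood of `a` contains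
a box `{x | ∀ k, |x_k - a_k| < ε_k}` with all `ε_k > 0`. The radii are chosen one coordinate at
a time, `ε_n` coming from the tube lemma around the compact box already found in the first `n`
coordinates. With boxes as neighbourhoods, addition, scalar multiplication and the coordinatewise
product are continuous because they are so in each coordinate.

A dense subalgebra `W` contains some `w` close to `e_m`, so that `w_m ≠ 0` differs from every
other coordinate of `w`. Multiplying `w` by the factors `w - w_k` (`k ≠ m`), which stay in `W`,
kills all coordinates but the `m`-th one, hence `e_m ∈ W` and `W = ℝ^∞`. The `e_m` generate
`ℝ^∞`, while finitely many elements lie in the subalgebra of sequences vanishing from some index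
on; and two dense subalgebras, both being `ℝ^∞`, are never disjoint.
-/

open Filter Topology Function

theorem exists_forall_of_exists_update {α : Type*} {P : ℕ → (ℕ → α) → Prop}
    (hP : ∀ n f g, (∀ k < n, f k = g k) → P n f → P n g) {f₀ : ℕ → α} (h₀ : P 0 f₀)
    (hstep : ∀ n f, P n f → ∃ x, P (n + 1) (update f n x)) : ∃ f, ∀ n, P n f := by
  have : Nonempty α := ⟨f₀ 0⟩
  choose! next hnext using hstep
  let F : ℕ → ℕ → α := fun m => Nat.rec f₀ (fun m f => update f m (next m f)) m
  have hF : ∀ m, P m (F m) := fun m => Nat.rec h₀ (fun m ih => hnext m _ ih) m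
  have hagree : ∀ m d, ∀ k < m, F (m + d) k = F m k := by
    intro m d
    induction d with
    | zero => exact fun _ _ => rfl
    | succ d ih =>
      intro k hk
      show update (F (m + d)) (m + d) (next (m + d) (F (m + d))) k = F m k
      rw [update_of_ne (by omega)]
      exact ih k hk
  refine ⟨fun k => F (k + 1) k, fun n => hP n _ _ (fun k hk => ?_) (hF n)⟩
  obtain ⟨d, rfl⟩ := Nat.exists_eq_add_of_lt hk
  rw [add_right_comm]
  exact hagree (k + 1) d k k.lt_succ_self

namespace Rinf

@[ext]
lemma ext {x y : Rinf} (h : ∀ k, x.seq k = y.seq k) : x = y := Subtype.ext (funext h)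

lemma exists_seq_eq_zero (x : Rinf) : ∃ N, ∀ k, N ≤ k → x.seq k = 0 :=
  (show ↥RinfSubmodule from x).2

@[simp] lemma seq_zero (k : ℕ) : (0 : Rinf).seq k = 0 := rfl
@[simp] lemma seq_add (x y : Rinf) (k : ℕ) : (x + y).seq k = x.seq k + y.seq k := rfl
@[simp] lemma seq_sub (x y : Rinf) (k : ℕ) : (x - y).seq k = x.seq k - y.seq k := rfl
@[simp] lemma seq_smul (c : ℝ) (x : Rinf) (k : ℕ) : (c • x).seq k = c * x.seq k := rfl
@[simp] lemma seq_mul (x y : Rinf) (k : ℕ) : (x * y).seq k = x.seq k * y.seq k := rfl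
lemma seq_uMap (n : ℕ) (v : Fin n → ℝ) (k : ℕ) :
    (uMap n v).seq k = if h : k < n then v ⟨k, h⟩ else 0 := rfl
lemma seq_eRinf (m k : ℕ) : (eRinf m).seq k = if k = m then 1 else 0 := rfl

lemma continuous_uMap (n : ℕ) : Continuous (uMap n) :=
  continuous_iff_coinduced_le.2 (le_iSup (fun n => TopologicalSpace.coinduced (uMap n) _) n)

lemma isOpen_iff {U : Set Rinf} : IsOpen U ↔ ∀ n, IsOpen (uMap n ⁻¹' U) :=
  (isOpen_iSup_iff (t := fun n => TopologicalSpace.coinduced (uMap n) inferInstance)).trans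
    (forall_congr' fun _ => isOpen_coinduced)

def box (a : Rinf) (ε : ℕ → ℝ) : Set Rinf := {x | ∀ k, dist (x.seq k) (a.seq k) < ε k}

lemma isOpen_box (a : Rinf) (ε : ℕ → ℝ) : IsOpen (box a ε) := by
  refine isOpen_iff.2 fun n => ?_
  have : uMap n ⁻¹' box a ε =
      {v | ∀ i : Fin n, dist (v i) (a.seq i) < ε i} ∩
        {_v | ∀ k, n ≤ k → dist 0 (a.seq k) < ε k} := by
    ext v
    simp only [box, Set.mem_preimage, Set.mem_ofPred_eq, Set.mem_inter_iff, seq_uMap]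
    refine ⟨fun h => ⟨fun i => by simpa [i.isLt] using h i, fun k hk => by
      simpa [not_lt.2 hk] using h k⟩, fun ⟨h₁, h₂⟩ k => ?_⟩
    by_cases hk : k < n
    · simpa [hk] using h₁ ⟨k, hk⟩
    · simpa [hk] using h₂ k (not_lt.1 hk)
  rw [this, Set.ofPred_forall]
  exact (isOpen_iInter_of_finite fun i =>
    isOpen_lt (continuous_apply i |>.dist continuous_const) continuous_const).inter isOpen_const

def overwrite (a : Rinf) {n : ℕ} (v : Fin n → ℝ) : Rinf :=
  (⟨fun k => if h : k < n then v ⟨k, h⟩ else a.seq k, by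
    obtain ⟨N, hN⟩ := a.exists_seq_eq_zero
    exact ⟨n + N, fun k hk => by simp [show ¬ k < n by omega, hN k (by omega)]⟩⟩ : RinfSubmodule)

lemma seq_overwrite (a : Rinf) {n : ℕ} (v : Fin n → ℝ) (k : ℕ) :
    (a.overwrite v).seq k = if h : k < n then v ⟨k, h⟩ else a.seq k := rfl

lemma continuous_overwrite (a : Rinf) (n : ℕ) :
    Continuous (a.overwrite : (Fin n → ℝ) → Rinf) := by
  obtain ⟨N, hN⟩ := a.exists_seq_eq_zero
  have : a.overwrite = fun v : Fin n → ℝ =>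
      uMap (n + N) fun i => if h : (i : ℕ) < n then v ⟨i, h⟩ else a.seq i := by
    ext v k
    simp only [seq_overwrite, seq_uMap]
    split_ifs <;> first | rfl | omega | exact hN k (by omega)
  rw [this]
  refine (continuous_uMap _).comp (continuous_pi fun i => ?_)
  split_ifs
  · exact continuous_apply _
  · exact continuous_const

lemma overwrite_seq (a x : Rinf) {n : ℕ} (h : ∀ k, n ≤ k → x.seq k = a.seq k) :
    a.overwrite (fun i : Fin n => x.seq i) = x := by
  ext k
  rw [seq_overwrite]
  split_ifs with hk
  · rfl
  · exact (h k (not_lt.1 hk)).symm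

lemma overwrite_snoc_seq (a : Rinf) {n : ℕ} (v : Fin n → ℝ) :
    a.overwrite (Fin.snoc v (a.seq n) : Fin (n + 1) → ℝ) = a.overwrite v := by
  ext k
  simp only [seq_overwrite, Fin.snoc]
  split_ifs with h₁ h₂
  · rfl
  · obtain rfl : k = n := by omega
    rfl
  · omega
  · rfl

def closedBox (n : ℕ) (a : Rinf) (ε : ℕ → ℝ) : Set Rinf :=
  a.overwrite '' Set.univ.pi fun i : Fin n => Metric.closedBall (a.seq i) (ε i)

lemma closedBox_zero (a : Rinf) (ε : ℕ → ℝ) : closedBox 0 a ε = {a} := by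
  refine Set.eq_singleton_iff_unique_mem.2 ⟨⟨fun i => a.seq i, fun i => i.elim0, ?_⟩, ?_⟩
  · exact overwrite_seq a a fun _ _ => rfl
  · rintro _ ⟨v, -, rfl⟩
    rw [Subsingleton.elim v fun i => a.seq i]
    exact overwrite_seq a a fun _ _ => rfl

lemma closedBox_congr {n : ℕ} (a : Rinf) {ε ε' : ℕ → ℝ} (h : ∀ k < n, ε k = ε' k) :
    closedBox n a ε = closedBox n a ε' := by
  simp only [closedBox, h _ (Fin.isLt _)]

lemma exists_closedBox_succ_subset {U : Set Rinf} (hU : IsOpen U) {a : Rinf} {n : ℕ}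
    {ε : ℕ → ℝ} (h : closedBox n a ε ⊆ U) :
    ∃ δ > 0, closedBox (n + 1) a (update ε n δ) ⊆ U := by
  let K : Set (Fin n → ℝ) := Set.univ.pi fun i => Metric.closedBall (a.seq i) (ε i)
  have hK : IsCompact K := isCompact_univ_pi fun i => isCompact_closedBall _ _
  have hφ : Continuous fun p : ℝ × (Fin n → ℝ) =>
      a.overwrite (Fin.snoc p.2 p.1 : Fin (n + 1) → ℝ) :=
    (continuous_overwrite a (n + 1)).comp
      (continuous_snd.finSnoc (A := fun _ => ℝ) continuous_fst)
  have hKU : ∀ᶠ t in 𝓝 (a.seq n), ∀ v ∈ K, a.overwrite (Fin.snoc v t : Fin (n + 1) → ℝ) ∈ U := by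
    refine hK.eventually_forall_of_forall_eventually
      fun v hv => hφ.continuousAt.preimage_mem_nhds (hU.mem_nhds ?_)
    simp only [overwrite_snoc_seq]
    exact h ⟨v, hv, rfl⟩
  obtain ⟨δ, hδ, hδU⟩ := Metric.eventually_nhds_iff.1 hKU
  refine ⟨δ / 2, half_pos hδ, ?_⟩
  rintro _ ⟨v, hv, rfl⟩
  rw [← Fin.snoc_init_self v]
  refine hδU ?_ _ fun i _ => ?_
  · have := hv (Fin.last n) (Set.mem_univ _)
    simp only [Fin.val_last, update_self, Metric.mem_closedBall] at this
    linarith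
  · have := hv i.castSucc (Set.mem_univ _)
    simpa [Fin.init, update_of_ne i.isLt.ne] using this

lemma exists_box_subset {U : Set Rinf} (hU : IsOpen U) {a : Rinf} (ha : a ∈ U) :
    ∃ ε : ℕ → ℝ, (∀ k, 0 < ε k) ∧ box a ε ⊆ U := by
  obtain ⟨ε, hε⟩ := exists_forall_of_exists_update
    (P := fun n ε => (∀ k < n, 0 < ε k) ∧ closedBox n a ε ⊆ U)
    (fun n f g hfg ⟨hpos, hsub⟩ =>
      ⟨fun k hk => hfg k hk ▸ hpos k hk, closedBox_congr a hfg ▸ hsub⟩)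
    (f₀ := 0) ⟨nofun, by simpa [closedBox_zero] using ha⟩
    (fun n ε ⟨hpos, hsub⟩ => by
      obtain ⟨δ, hδ, hsub'⟩ := exists_closedBox_succ_subset hU hsub
      refine ⟨δ, fun k hk => ?_, hsub'⟩
      rcases eq_or_ne k n with rfl | hkn
      · simpa using hδ
      · simpa [hkn] using hpos k (by omega))
  refine ⟨ε, fun k => (hε (k + 1)).1 k k.lt_succ_self, fun x hx => ?_⟩
  obtain ⟨M, hM⟩ := x.exists_seq_eq_zero
  obtain ⟨N, hN⟩ := a.exists_seq_eq_zero
  refine (hε (M + N)).2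
    ⟨fun i => x.seq i, fun i _ => (hx i).le, overwrite_seq a x fun k hk => ?_⟩
  rw [hM k (by omega), hN k (by omega)]

lemma nhds_hasBasis_box (a : Rinf) :
    (𝓝 a).HasBasis (fun ε : ℕ → ℝ => ∀ k, 0 < ε k) (box a) := by
  refine ⟨fun s => ⟨fun hs => ?_, fun ⟨ε, hε, h⟩ => ?_⟩⟩
  · obtain ⟨U, hUs, hU, haU⟩ := mem_nhds_iff.1 hs
    obtain ⟨ε, hε, h⟩ := exists_box_subset hU haU
    exact ⟨ε, hε, h.trans hUs⟩
  · exact mem_of_superset ((isOpen_box a ε).mem_nhds fun k => by simpa using hε k) h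

lemma continuous_of_seq_eq {F : Rinf × Rinf → Rinf} {g : ℝ × ℝ → ℝ} (hg : Continuous g)
    (hF : ∀ p k, (F p).seq k = g (p.1.seq k, p.2.seq k)) : Continuous F := by
  refine continuous_iff_continuousAt.2 fun ⟨a, b⟩ => ?_
  rw [ContinuousAt, nhds_prod_eq, ((nhds_hasBasis_box a).prod (nhds_hasBasis_box b)).tendsto_iff
    (nhds_hasBasis_box _)]
  intro ε hε
  have : ∀ k, ∃ η > 0, ∀ x y : ℝ, dist x (a.seq k) < η → dist y (b.seq k) < η →
      dist (g (x, y)) (g (a.seq k, b.seq k)) < ε k := fun k => by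
    obtain ⟨η, hη, h⟩ := Metric.continuousAt_iff.1 hg.continuousAt (ε k) (hε k)
    exact ⟨η, hη, fun x y hx hy => h (by rw [Prod.dist_eq]; exact max_lt hx hy)⟩
  choose η hη hgη using this
  exact ⟨(η, η), ⟨hη, hη⟩, fun p ⟨hx, hy⟩ k => by
    rw [hF, hF]
    exact hgη k _ _ (hx k) (hy k)⟩

instance : ContinuousAdd Rinf := ⟨continuous_of_seq_eq continuous_add fun _ _ => rfl⟩

lemma continuous_mul : Continuous fun p : Rinf × Rinf => p.1 * p.2 :=
  continuous_of_seq_eq _root_.continuous_mul fun _ _ => rfl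

instance : ContinuousSMul ℝ Rinf := by
  refine ⟨continuous_iff_continuousAt.2 fun ⟨c, a⟩ => ?_⟩
  rw [ContinuousAt, nhds_prod_eq, (nhds_hasBasis_box _).tendsto_right_iff]
  intro ε hε
  obtain ⟨N, hN⟩ := a.exists_seq_eq_zero
  have hsmall : ∀ᶠ t in 𝓝 c, ∀ k, |t - c| * |a.seq k| < ε k / 2 := by
    have hk : ∀ k ∈ Finset.range N, ∀ᶠ t in 𝓝 c, |t - c| * |a.seq k| < ε k / 2 := fun k _ =>
      (((continuous_id.sub continuous_const).abs.mul continuous_const).tendsto' c 0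
        (by simp)).eventually (gt_mem_nhds (half_pos (hε k)))
    filter_upwards [(eventually_all_finset _).2 hk] with t ht k
    by_cases hkN : k < N
    · exact ht k (Finset.mem_range.2 hkN)
    · simpa [hN k (not_lt.1 hkN)] using half_pos (hε k)
  have hbound : ∀ᶠ t in 𝓝 c, |t| < |c| + 1 :=
    (continuous_abs.tendsto c).eventually (gt_mem_nhds (lt_add_one _))
  let η k := ε k / (2 * (|c| + 1))
  have hη : ∀ k, 0 < η k := fun k => div_pos (hε k) (by positivity)
  filter_upwards [(hbound.and hsmall).prod_mk ((nhds_hasBasis_box a).mem_of_mem hη)]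
    with ⟨t, x⟩ ⟨⟨ht, htc⟩, hx⟩ k
  have hxk : |x.seq k - a.seq k| < η k := hx k
  simp only [seq_smul, Real.dist_eq]
  calc |t * x.seq k - c * a.seq k| = |t * (x.seq k - a.seq k) + (t - c) * a.seq k| := by ring_nf
    _ ≤ |t| * |x.seq k - a.seq k| + |t - c| * |a.seq k| := by
      rw [← abs_mul, ← abs_mul]; exact abs_add_le _ _
    _ < (|c| + 1) * η k + ε k / 2 :=
      add_lt_add_of_le_of_lt (mul_le_mul ht.le hxk.le (abs_nonneg _) (by positivity)) (htc k)
    _ = ε k := by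
      simp only [η]
      field_simp
      ring

lemma seq_sum {ι : Type*} (s : Finset ι) (f : ι → Rinf) (k : ℕ) :
    (∑ i ∈ s, f i).seq k = ∑ i ∈ s, (f i).seq k :=
  map_sum (⟨⟨fun x : Rinf => x.seq k, rfl⟩, fun _ _ => rfl⟩ : Rinf →+ ℝ) f s

lemma eRinf_injective : Injective eRinf := fun p q h => by
  by_contra hpq
  simpa [seq_eRinf, hpq] using congrArg (seq · p) h

instance : Nontrivial Rinf :=
  ⟨⟨eRinf 0, 0, fun h => by simpa [seq_eRinf] using congrArg (seq · 0) h⟩⟩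

lemma eq_top_of_forall_eRinf_mem (W : Submodule ℝ Rinf) (h : ∀ m, eRinf m ∈ W) : W = ⊤ := by
  refine Submodule.eq_top_iff'.2 fun x => ?_
  obtain ⟨M, hM⟩ := x.exists_seq_eq_zero
  have hx : x = ∑ k ∈ Finset.range M, x.seq k • eRinf k := by
    ext j
    simp only [seq_sum, seq_smul, seq_eRinf, mul_ite, mul_one, mul_zero, Finset.sum_ite_eq,
      Finset.mem_range]
    split_ifs with hj
    · rfl
    · exact hM j (not_lt.1 hj)
  rw [hx]
  exact W.sum_mem fun k _ => W.smul_mem _ (h k)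

lemma generatesAlg_range_eRinf : GeneratesAlg (Set.range eRinf) ⊤ :=
  ⟨fun _ _ _ _ => Submodule.mem_top, fun _ _ => Submodule.mem_top,
    fun W _ hS => (eq_top_of_forall_eRinf_mem W fun m => hS ⟨m, rfl⟩).ge⟩

def supportedBelow (N : ℕ) : Submodule ℝ Rinf where
  carrier := {x | ∀ k, N ≤ k → x.seq k = 0}
  add_mem' hx hy k hk := by simp [hx k hk, hy k hk]
  zero_mem' _ _ := rfl
  smul_mem' c x hx k hk := by simp [hx k hk]

lemma isSubalgebraRinf_supportedBelow (N : ℕ) : IsSubalgebraRinf (supportedBelow N) :=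
  fun x hx y _ k hk => by simp [hx k hk]

lemma infinite_of_generatesAlg_top {S : Set Rinf} (hS : GeneratesAlg S ⊤) : S.Infinite := by
  intro hfin
  obtain ⟨N, hN⟩ := eventually_atTop.1 <|
    (hfin.eventually_all (p := fun x k => x.seq k = 0)).2 fun x _ =>
      eventually_atTop.2 x.exists_seq_eq_zero
  have := hS.2.2 _ (isSubalgebraRinf_supportedBelow N) fun x hx k hk => hN k hk x hx
  simpa [seq_eRinf] using this (Submodule.mem_top (x := eRinf N)) N le_rfl

lemma isAleph0GenAlg_top : IsAleph0GenAlg ⊤ :=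
  ⟨⟨_, generatesAlg_range_eRinf, by rw [mk_range_eq _ eRinf_injective, mk_nat]⟩,
    fun _ hS => infinite_iff.1 (infinite_of_generatesAlg_top hS).to_subtype⟩

end Rinf

lemma IsAleph0GenAlg.isSubalgebraRinf {W : Submodule ℝ Rinf} (h : IsAleph0GenAlg W) :
    IsSubalgebraRinf W := by
  obtain ⟨_, hS, -⟩ := h.1
  exact hS.1

open Rinf

namespace IsSubalgebraRinf

variable {W : Submodule ℝ Rinf} (hW : IsSubalgebraRinf W)
include hW

lemma exists_mem_seq_eq_mul_prod {w : Rinf} (hw : w ∈ W) (T : Finset ℝ) :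
    ∃ z ∈ W, ∀ k, z.seq k = w.seq k * ∏ s ∈ T, (w.seq k - s) := by
  classical
  induction T using Finset.induction_on with
  | empty => exact ⟨w, hw, fun k => by simp⟩
  | insert s T hs ih =>
    obtain ⟨z, hz, hzk⟩ := ih
    refine ⟨z * w - s • z, W.sub_mem (hW z hz w hw) (W.smul_mem s hz), fun k => ?_⟩
    simp only [seq_sub, seq_mul, seq_smul, Finset.prod_insert hs, hzk]
    ring

lemma eRinf_mem {w : Rinf} (hw : w ∈ W) {m : ℕ} (hm : w.seq m ≠ 0)
    (hne : ∀ k ≠ m, w.seq k ≠ w.seq m) : eRinf m ∈ W := by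
  classical
  obtain ⟨M, hM⟩ := w.exists_seq_eq_zero
  obtain ⟨z, hz, hzk⟩ :=
    hW.exists_mem_seq_eq_mul_prod hw ((Finset.image w.seq (Finset.range M)).erase (w.seq m))
  have hzm : z.seq m ≠ 0 := by
    rw [hzk]
    exact mul_ne_zero hm <| Finset.prod_ne_zero_iff.2 fun s hs =>
      sub_ne_zero.2 (Finset.ne_of_mem_erase hs).symm
  have hz0 : ∀ k ≠ m, z.seq k = 0 := by
    intro k hk
    rw [hzk]
    by_cases hkM : k < M
    · exact mul_eq_zero_of_right _ (Finset.prod_eq_zero (Finset.mem_erase.2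
        ⟨hne k hk, Finset.mem_image_of_mem _ (Finset.mem_range.2 hkM)⟩) (sub_self _))
    · rw [hM k (not_lt.1 hkM), zero_mul]
  convert W.smul_mem (z.seq m)⁻¹ hz
  ext k
  rcases eq_or_ne k m with rfl | hk
  · simp [seq_eRinf, hzm]
  · simp [seq_eRinf, hk, hz0 k hk]

lemma eq_top_of_dense (hd : Dense (W : Set Rinf)) : W = ⊤ := by
  refine eq_top_of_forall_eRinf_mem W fun m => ?_
  obtain ⟨w, hwb, hwW⟩ := hd.inter_open_nonempty (box (eRinf m) fun _ => 1 / 2)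
    (isOpen_box _ _) ⟨eRinf m, fun k => by simp⟩
  have hw : ∀ k, |w.seq k - if k = m then 1 else 0| < 1 / 2 := hwb
  have hwm : 1 / 2 < w.seq m := by
    have := hw m
    rw [if_pos rfl, abs_lt] at this
    linarith
  refine hW.eRinf_mem hwW (by positivity) fun k hk => ?_
  have := hw k
  simp only [if_neg hk, sub_zero, abs_lt] at this
  exact (this.2.trans hwm).ne

end IsSubalgebraRinf

/-- With the coordinatewise product, `ℝ^∞` is a commutative topological
algebra (multiplication is jointly continuous for the inductive limit topology), and `ℝ^∞` has
no proper dense subalgebra: every dense subalgebra equals `ℝ^∞`.  In particular `ℝ^∞` is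
`ℵ₀`-dense-algebrable in itself but not `ℵ₀`-infinitely `ℵ₀`-dense-algebrable. -/
theorem stmt18 :
    (∀ x y : Rinf, x * y = y * x) ∧
    ContinuousAdd Rinf ∧ ContinuousSMul ℝ Rinf ∧
    Continuous (fun p : Rinf × Rinf => p.1 * p.2) ∧
    (∀ W : Submodule ℝ Rinf, IsSubalgebraRinf W → Dense (W : Set Rinf) → W = ⊤) ∧
    (∃ W : Submodule ℝ Rinf, IsAleph0GenAlg W ∧ Dense (W : Set Rinf)) ∧
    ¬ ∃ (ι : Type) (Y : ι → Submodule ℝ Rinf), #ι = Cardinal.aleph0 ∧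
        (∀ i, IsAleph0GenAlg (Y i) ∧ Dense ((Y i : Submodule ℝ Rinf) : Set Rinf)) ∧
        ∀ i j, i ≠ j → Y i ⊓ Y j = ⊥ := by
  refine ⟨fun x y => Rinf.ext fun k => mul_comm _ _, inferInstance, inferInstance,
    Rinf.continuous_mul, fun W hW hd => hW.eq_top_of_dense hd,
    ⟨⊤, Rinf.isAleph0GenAlg_top, by simp⟩, ?_⟩
  rintro ⟨ι, Y, hι, hY, hdisj⟩
  have : Infinite ι := infinite_iff.2 hι.ge
  obtain ⟨i, j, hij⟩ := exists_pair_ne ι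
  have htop : ∀ i, Y i = ⊤ := fun i => (hY i).1.isSubalgebraRinf.eq_top_of_dense (hY i).2
  simpa [htop] using hdisj i j hij
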